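/- Let α, β ∈ (0,1) and k₀, k₁ ∈ ℝ. Then u(x,t) = k₀ + k₁² ((Γ(β+1))²/Γ(α+1)) t^α + k₁ x^β is an exact solution of the time-space fractional nonlinear diffusion equation: for all x > 0 and t > 0, (C_t^α u)(x,t) = ((C_x^β u)(x,t))² + u (C_x^β (C_x^β u))(x,t), where u = u(x,t). -/

import Mathlib

/-!
The Caputo derivative of order `γ ∈ (0,1)` of `s ↦ s ^ γ` is the constant `Γ(γ + 1)`: after
differentiating, the defining integral is the Beta integral `B(γ, 1 - γ) = Γ(γ) Γ(1 - γ)`.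
Hence `C_x^β u = k₁ Γ(β + 1)` is constant in `x`, so `C_x^β (C_x^β u) = 0`, while
`C_t^α u = k₁² Γ(β + 1)² = (C_x^β u)²`.
-/

/-- Caputo fractional partial derivative of order `α` with respect to `t`. -/
noncomputable def caputoT (α : ℝ) (u : ℝ → ℝ → ℝ) : ℝ → ℝ → ℝ := fun x t =>
  (1 / Real.Gamma (1 - α)) * ∫ s in (0:ℝ)..t, deriv (fun s' => u x s') s * (t - s) ^ (-α)

/-- Caputo fractional partial derivative of order `β` with respect to `x`. -/
noncomputable def caputoX (β : ℝ) (u : ℝ → ℝ → ℝ) : ℝ → ℝ → ℝ := fun x t =>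
  (1 / Real.Gamma (1 - β)) * ∫ y in (0:ℝ)..x, deriv (fun y' => u y' t) y * (x - y) ^ (-β)

/-- The exact solution `u(x,t) = k₀ + k₁² (Γ(β+1))²/Γ(α+1) t^α + k₁ x^β`. -/
noncomputable def uSol (α β k₀ k₁ : ℝ) : ℝ → ℝ → ℝ := fun x t =>
  k₀ + k₁ ^ 2 * (Real.Gamma (β + 1) ^ 2 / Real.Gamma (α + 1)) * t ^ α + k₁ * x ^ β

open Real Set

noncomputable def caputo (γ : ℝ) (f : ℝ → ℝ) (T : ℝ) : ℝ :=
  (1 / Gamma (1 - γ)) * ∫ s in (0:ℝ)..T, deriv f s * (T - s) ^ (-γ)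

lemma caputoT_apply (α : ℝ) (u : ℝ → ℝ → ℝ) (x t : ℝ) :
    caputoT α u x t = caputo α (u x) t :=
  rfl

lemma caputoX_apply (β : ℝ) (u : ℝ → ℝ → ℝ) (x t : ℝ) :
    caputoX β u x t = caputo β (fun y => u y t) x :=
  rfl

lemma integral_rpow_sub_one_mul_sub_rpow_neg {γ T : ℝ} (hγ : γ ∈ Ioo (0 : ℝ) 1) (hT : 0 < T) :
    ∫ s in (0:ℝ)..T, s ^ (γ - 1) * (T - s) ^ (-γ) = Gamma γ * Gamma (1 - γ) := by
  have hsum : (γ : ℂ) + ((1 - γ : ℝ) : ℂ) = 1 := by push_cast; ring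
  have hbeta : Complex.betaIntegral γ ((1 - γ : ℝ) : ℂ) = ((Gamma γ * Gamma (1 - γ) : ℝ) : ℂ) := by
    have h := Complex.Gamma_mul_Gamma_eq_betaIntegral (s := γ) (t := ((1 - γ : ℝ) : ℂ))
      (by simpa using hγ.1) (by simpa using hγ.2)
    rw [hsum, Complex.Gamma_one, one_mul] at h
    rw [← h, Complex.Gamma_ofReal, Complex.Gamma_ofReal, Complex.ofReal_mul]
  have hscaled := Complex.betaIntegral_scaled (γ : ℂ) ((1 - γ : ℝ) : ℂ) hT
  rw [hsum, sub_self, Complex.cpow_zero, one_mul, hbeta] at hscaled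
  have hcomplex : ∫ s in (0:ℝ)..T, (s : ℂ) ^ ((γ : ℂ) - 1) * ((T : ℂ) - s) ^ (((1 - γ : ℝ) : ℂ) - 1)
      = ((∫ s in (0:ℝ)..T, s ^ (γ - 1) * (T - s) ^ (-γ) : ℝ) : ℂ) := by
    rw [← intervalIntegral.integral_ofReal]
    refine intervalIntegral.integral_congr fun s hs => ?_
    rw [uIcc_of_le hT.le] at hs
    simp only [Complex.ofReal_mul, Complex.ofReal_cpow hs.1, Complex.ofReal_cpow (sub_nonneg.2 hs.2)]
    push_cast
    ring_nf
  rw [hcomplex] at hscaled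
  exact_mod_cast hscaled

lemma caputo_eq_of_hasDerivAt_rpow {γ T a : ℝ} {f : ℝ → ℝ} (hγ : γ ∈ Ioo (0 : ℝ) 1) (hT : 0 < T)
    (hf : ∀ s > 0, HasDerivAt f (a * (γ * s ^ (γ - 1))) s) :
    caputo γ f T = a * Gamma (γ + 1) := by
  have hΓ : Gamma (1 - γ) ≠ 0 := (Gamma_pos_of_pos (sub_pos.2 hγ.2)).ne'
  have hintegrand : ∫ s in (0:ℝ)..T, deriv f s * (T - s) ^ (-γ)
      = ∫ s in (0:ℝ)..T, a * γ * (s ^ (γ - 1) * (T - s) ^ (-γ)) := by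
    refine intervalIntegral.integral_congr_ae (Filter.Eventually.of_forall fun s hs => ?_)
    rw [uIoc_of_le hT.le] at hs
    rw [(hf s hs.1).deriv]
    ring
  rw [caputo, hintegrand, intervalIntegral.integral_const_mul,
    integral_rpow_sub_one_mul_sub_rpow_neg hγ hT, Gamma_add_one hγ.1.ne']
  field_simp

lemma caputo_eq_zero_of_eqOn_Ioi {γ T c : ℝ} {f : ℝ → ℝ} (hγ : γ ∈ Ioo (0 : ℝ) 1) (hT : 0 < T)
    (hf : EqOn f (fun _ => c) (Ioi 0)) :
    caputo γ f T = 0 := by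
  have hderiv : ∀ s > 0, HasDerivAt f (0 * (γ * s ^ (γ - 1))) s := fun s hs => by
    rw [zero_mul]
    exact (hasDerivAt_const s c).congr_of_eventuallyEq (Filter.eventuallyEq_of_mem (Ioi_mem_nhds hs) hf)
  rw [caputo_eq_of_hasDerivAt_rpow hγ hT hderiv, zero_mul]

lemma hasDerivAt_uSol_left (α β k₀ k₁ t : ℝ) {x : ℝ} (hx : 0 < x) :
    HasDerivAt (fun y => uSol α β k₀ k₁ y t) (k₁ * (β * x ^ (β - 1))) x :=
  ((hasDerivAt_rpow_const (Or.inl hx.ne')).const_mul k₁).const_add _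

lemma hasDerivAt_uSol_right (α β k₀ k₁ x : ℝ) {t : ℝ} (ht : 0 < t) :
    HasDerivAt (uSol α β k₀ k₁ x)
      (k₁ ^ 2 * (Gamma (β + 1) ^ 2 / Gamma (α + 1)) * (α * t ^ (α - 1))) t :=
  (((hasDerivAt_rpow_const (Or.inl ht.ne')).const_mul _).const_add k₀).add_const _

/-- **Exact solution of the time-space fractional nonlinear diffusion equation**
`C_t^α u = (C_x^β u)² + u C_x^β(C_x^β u)` for all `x > 0`, `t > 0`. -/
theorem fractional_nonlinear_diffusion_exact (α β k₀ k₁ : ℝ)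
    (hα : α ∈ Set.Ioo (0 : ℝ) 1) (hβ : β ∈ Set.Ioo (0 : ℝ) 1) :
    ∀ x : ℝ, 0 < x → ∀ t : ℝ, 0 < t →
      caputoT α (uSol α β k₀ k₁) x t =
        (caputoX β (uSol α β k₀ k₁) x t) ^ 2
          + uSol α β k₀ k₁ x t * caputoX β (caputoX β (uSol α β k₀ k₁)) x t := by
  intro x hx t ht
  have hX : ∀ y > 0, caputoX β (uSol α β k₀ k₁) y t = k₁ * Gamma (β + 1) := fun y hy => by
    rw [caputoX_apply]
    exact caputo_eq_of_hasDerivAt_rpow hβ hy fun _ => hasDerivAt_uSol_left α β k₀ k₁ t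
  have hXX : caputoX β (caputoX β (uSol α β k₀ k₁)) x t = 0 := by
    rw [caputoX_apply]
    exact caputo_eq_zero_of_eqOn_Ioi hβ hx hX
  have hT : caputoT α (uSol α β k₀ k₁) x t
      = k₁ ^ 2 * (Gamma (β + 1) ^ 2 / Gamma (α + 1)) * Gamma (α + 1) := by
    rw [caputoT_apply]
    exact caputo_eq_of_hasDerivAt_rpow hα ht fun _ => hasDerivAt_uSol_right α β k₀ k₁ x
  have hΓ : Gamma (α + 1) ≠ 0 := (Gamma_pos_of_pos (by linarith [hα.1])).ne'
  rw [hT, hX x hx, hXX]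
  field_simp
  ring
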